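/- arXiv:1902.02936 — 3 statements merged into one kernel-verified Lean document; each statement's English description precedes it below -/
import Mathlib

section
/- Let p be a prime and let E ⊆ 𝔽_p^3 be nonempty with |E| ≤ p². Suppose there is a two-dimensional subspace P₀ of 𝔽_p^3 such that Ê(ξ) = 0 for every ξ ∈ P₀ \ {0}. Then |E| = p². -/
open Finset

/-- The character `x ↦ e^{2πi (x·a)/p}` on `𝔽_p^d`. -/
noncomputable def chr (p : ℕ) {d : ℕ} (a x : Fin d → ZMod p) : ℂ :=
  Complex.exp (2 * (Real.pi : ℂ) * Complex.I *
    ((ZMod.val (∑ i, x i * a i) : ℕ) : ℂ) / (p : ℂ))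

/-- `(E, A)` is a spectral pair: the characters `χ_a`, `a ∈ A`, restricted to `E`,
are pairwise orthogonal, span `L²(E)`, and are linearly independent, i.e. they
form an orthogonal basis of `L²(E)`. -/
def IsSpectralPair (p : ℕ) {d : ℕ} (E A : Finset (Fin d → ZMod p)) : Prop :=
  (∀ a ∈ A, ∀ b ∈ A, a ≠ b →
    ∑ x ∈ E, chr p a x * (starRingEnd ℂ) (chr p b x) = 0) ∧
  (∀ f : E → ℂ, ∃ c : A → ℂ, ∀ x : E, f x = ∑ a : A, c a * chr p a.1 x.1) ∧
  (∀ c : A → ℂ, (∀ x : E, ∑ a : A, c a * chr p a.1 x.1 = 0) → ∀ a, c a = 0)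

/-- `E` is a spectral set. -/
def IsSpectral (p : ℕ) {d : ℕ} (E : Finset (Fin d → ZMod p)) : Prop :=
  ∃ A, IsSpectralPair p E A

/-- `E` tiles `𝔽_p^d` by translation. -/
def Tiles (p : ℕ) {d : ℕ} (E : Finset (Fin d → ZMod p)) : Prop :=
  ∃ A : Finset (Fin d → ZMod p),
    ∀ x, (∑ a ∈ A, if x - a ∈ E then (1 : ℕ) else 0) = 1

/-- `E` determines the direction (one-dimensional subspace) `D`. -/
def Determines (p : ℕ) {d : ℕ} (E : Finset (Fin d → ZMod p))
    (D : Submodule (ZMod p) (Fin d → ZMod p)) : Prop :=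
  ∃ e₁ ∈ E, ∃ e₂ ∈ E, e₁ ≠ e₂ ∧ e₁ - e₂ ∈ D

/-- The Fourier transform of the indicator function of `E`. -/
noncomputable def ftE (p : ℕ) {d : ℕ} (E : Finset (Fin d → ZMod p))
    (ξ : Fin d → ZMod p) : ℂ :=
  ((p : ℂ) ^ d)⁻¹ * ∑ x ∈ E, Complex.exp (-(2 * (Real.pi : ℂ) * Complex.I *
    ((ZMod.val (∑ i, x i * ξ i) : ℕ) : ℂ) / (p : ℂ)))

/-- The orthogonal set `S^⊥ = {x : x · y = 0 for all y ∈ S}`. -/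
def perpSet (p : ℕ) {d : ℕ} (S : Submodule (ZMod p) (Fin d → ZMod p)) :
    Set (Fin d → ZMod p) :=
  {x | ∀ y ∈ S, ∑ i, x i * y i = 0}

/-! Write `e(t) = exp(2πi t/p)`. Summing the Fourier inversion formula only over a subspace `P`
gives `∑_{ξ ∈ P} Ê(ξ) e(x₀ · ξ) = p^{-d} |P| · |E ∩ (x₀ + P^⊥)|`, since the character sum
`∑_{ξ ∈ P} e((x₀ - y) · ξ)` is `|P|` or `0` according to whether `x₀ - y ∈ P^⊥`.
If `Ê` vanishes on `P \ {0}`, the left side is `Ê(0) = p^{-d} |E|`, so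
`|E| = |P| · |E ∩ (x₀ + P^⊥)|`; for a plane in `𝔽_p^3` and `x₀ ∈ E` this forces `|E| ≥ p²`. -/

open Matrix

section

variable {p : ℕ} [NeZero p] {d : ℕ}

lemma ftE_eq_sum_stdAddChar (E : Finset (Fin d → ZMod p)) (ξ : Fin d → ZMod p) :
    ftE p E ξ = ((p : ℂ) ^ d)⁻¹ * ∑ x ∈ E, ZMod.stdAddChar (-(x ⬝ᵥ ξ)) := by
  simp only [ftE, AddChar.map_neg_eq_inv, ZMod.stdAddChar_apply, ZMod.toCircle_apply,
    ← Complex.exp_neg, mul_div_assoc]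
  rfl

lemma ZMod.stdAddChar_eq_one_iff (x : ZMod p) : ZMod.stdAddChar x = 1 ↔ x = 0 := by
  rw [← (ZMod.stdAddChar (N := p)).map_zero_eq_one, ZMod.injective_stdAddChar.eq_iff]

open Classical in
lemma sum_submodule_stdAddChar_dotProduct (P : Submodule (ZMod p) (Fin d → ZMod p))
    (z : Fin d → ZMod p) :
    ∑ ξ : P, ZMod.stdAddChar (z ⬝ᵥ (ξ : Fin d → ZMod p)) =
      if z ∈ perpSet p P then (Fintype.card P : ℂ) else 0 := by
  let ψ : AddChar P ℂ := ZMod.stdAddChar.compAddMonoidHom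
    ((dotProductBilin (ZMod p) (ZMod p) z).toAddMonoidHom.comp P.subtype.toAddMonoidHom)
  have hψ : z ∈ perpSet p P ↔ ψ = 0 := by
    simp [AddChar.eq_zero_iff, ψ, perpSet, ZMod.stdAddChar_eq_one_iff, dotProduct]
  convert ψ.sum_eq_ite using 2
  rfl

open Classical in
lemma sum_ftE_mul_stdAddChar (P : Submodule (ZMod p) (Fin d → ZMod p))
    (E : Finset (Fin d → ZMod p)) (x₀ : Fin d → ZMod p) :
    ∑ ξ : P, ftE p E ξ * ZMod.stdAddChar (x₀ ⬝ᵥ (ξ : Fin d → ZMod p)) =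
      ((p : ℂ) ^ d)⁻¹ * (Fintype.card P * #{y ∈ E | x₀ - y ∈ perpSet p P}) := by
  simp_rw [ftE_eq_sum_stdAddChar, mul_assoc, ← mul_sum, sum_mul, ← AddChar.map_add_eq_mul,
    neg_add_eq_sub, ← sub_dotProduct]
  rw [sum_comm]
  simp_rw [sum_submodule_stdAddChar_dotProduct, sum_ite, sum_const_zero, add_zero, sum_const,
    nsmul_eq_mul, mul_comm]

open Classical in
theorem card_eq_card_mul_card_filter_of_ftE_eq_zero (P : Submodule (ZMod p) (Fin d → ZMod p))
    (E : Finset (Fin d → ZMod p)) (hvanish : ∀ ξ ∈ P, ξ ≠ 0 → ftE p E ξ = 0)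
    (x₀ : Fin d → ZMod p) :
    #E = Fintype.card P * #{y ∈ E | x₀ - y ∈ perpSet p P} := by
  have h := sum_ftE_mul_stdAddChar P E x₀
  rw [Fintype.sum_eq_single 0 fun ξ hξ ↦ by
    rw [hvanish ξ ξ.2 (by simpa using hξ), zero_mul]] at h
  simp only [Submodule.coe_zero, dotProduct_zero, AddChar.map_zero_eq_one, mul_one,
    ftE_eq_sum_stdAddChar, neg_zero, sum_const, nsmul_one] at h
  have hpd : ((p : ℂ) ^ d)⁻¹ ≠ 0 := by simp [NeZero.ne]
  exact_mod_cast mul_left_cancel₀ hpd h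

end

/-- If `E ⊆ 𝔽_p^3` is nonempty with `|E| ≤ p²` and the Fourier transform of `E`
vanishes on the nonzero points of some two-dimensional subspace `P₀`,
then `|E| = p²`. -/
theorem card_eq_p_sq_of_vanishing_on_plane (p : ℕ) (hp : p.Prime)
    (E : Finset (Fin 3 → ZMod p)) (hne : E.Nonempty) (hcard : E.card ≤ p ^ 2)
    (P₀ : Submodule (ZMod p) (Fin 3 → ZMod p))
    (hP₀ : Module.finrank (ZMod p) P₀ = 2)
    (hvanish : ∀ ξ : Fin 3 → ZMod p, ξ ∈ P₀ → ξ ≠ 0 → ftE p E ξ = 0) :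
    E.card = p ^ 2 := by
  classical
  have : Fact p.Prime := ⟨hp⟩
  obtain ⟨x₀, hx₀⟩ := hne
  have hP₀card : Fintype.card P₀ = p ^ 2 := by
    rw [Module.card_eq_pow_finrank (K := ZMod p), ZMod.card, hP₀]
  have hE := card_eq_card_mul_card_filter_of_ftE_eq_zero P₀ E hvanish x₀
  have hpos : 0 < #{y ∈ E | x₀ - y ∈ perpSet p P₀} :=
    card_pos.2 ⟨x₀, mem_filter.2 ⟨hx₀, by simp [perpSet]⟩⟩
  rw [hE, hP₀card] at hcard ⊢
  exact le_antisymm hcard (Nat.le_mul_of_pos_right _ hpos)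
end

section
/- Let p be an odd prime and suppose E, A ⊆ 𝔽_p^3 form a spectral pair with |E| = |A| = mp, where 2 ≤ m ≤ p − 1. Then |E ∩ P| ≤ p and |A ∩ P| ≤ p for every plane P of 𝔽_p^3 (every coset of every two-dimensional subspace). -/
open Finset

/-!
Let `ψ` be the standard additive character of `𝔽_p`. Since `|E| = |A|`, the character table of a
spectral pair is a multiple of a unitary matrix, so its rows are orthogonal as well as its
columns: `∑_{x ∈ E} ψ(x·(a - b)) = 0` for distinct `a, b ∈ A`, and symmetrically with `E` and `A`
exchanged. The `p`-th cyclotomic polynomial is irreducible, so a vanishing rational combination of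
the `p`-th roots of unity has equal coefficients; hence `x ↦ x·(a - b)` is equidistributed on `E`.

If a plane `v + W` held more than `p` points of `A`, pigeonhole would make every nonzero `w ∈ W`
a multiple of such a difference `a - b`, so `p · |{x ∈ E : x·w = 0}| = |E|` for all `p² - 1` of
them. Counting the pairs `(x, w) ∈ E × W` with `x·w = 0` the other way round (for each `x` this is
a nonzero linear form on `W` unless `x ∈ W^⊥`) gives `|E| = p² · |E ∩ W^⊥|`, i.e. `p ∣ m`.
-/

open Matrix ZMod Module

theorem chr_eq_stdAddChar {p d : ℕ} [NeZero p] (a x : Fin d → ZMod p) :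
    chr p a x = stdAddChar (x ⬝ᵥ a) := by
  rw [stdAddChar_apply, toCircle_apply]
  rfl

theorem ZMod.stdAddChar_eq_pow_val {p : ℕ} [NeZero p] (t : ZMod p) :
    stdAddChar t = stdAddChar (1 : ZMod p) ^ t.val := by
  rw [← AddChar.map_nsmul_eq_pow, nsmul_one, natCast_zmod_val]

theorem ZMod.isPrimitiveRoot_stdAddChar_one (p : ℕ) [NeZero p] :
    IsPrimitiveRoot (stdAddChar (1 : ZMod p)) p := by
  have h := stdAddChar_coe (N := p) 1
  rw [Int.cast_one, Int.cast_one, mul_one] at h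
  exact h ▸ Complex.isPrimitiveRoot_exp p (NeZero.ne p)

theorem ZMod.eq_of_sum_mul_stdAddChar_eq_zero {p : ℕ} [hp : Fact p.Prime] {α : ZMod p → ℚ}
    (h : ∑ t, (α t : ℂ) * stdAddChar t = 0) (s t : ZMod p) : α s = α t := by
  have hval : ∀ i : Fin p, (finEquiv p i).val = i.val := by
    obtain _ | n := p
    · exact absurd hp.out Nat.not_prime_zero
    · exact fun _ => rfl
  rw [← (finEquiv p).toEquiv.sum_comp] at h
  simp only [RingEquiv.toEquiv_eq_coe, EquivLike.coe_coe, stdAddChar_eq_pow_val (finEquiv p _),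
    hval] at h
  simpa using ((isPrimitiveRoot_stdAddChar_one p).sum_eq_zero_iff_forall_eq hp.out
    (α ∘ finEquiv p)).mp h ((finEquiv p).symm s) ((finEquiv p).symm t)

theorem Finset.mul_card_filter_eq_card_of_sum_stdAddChar_eq_zero {α : Type*} {p : ℕ}
    [Fact p.Prime] (S : Finset α) (g : α → ZMod p) (h : ∑ x ∈ S, stdAddChar (g x) = 0)
    (t : ZMod p) : p * #{x ∈ S | g x = t} = #S := by
  classical
  have hfiber : ∑ s, ((#{x ∈ S | g x = s} : ℚ) : ℂ) * stdAddChar s = 0 := by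
    rw [← h, ← sum_fiberwise S g]
    refine sum_congr rfl fun s _ => ?_
    rw [sum_congr rfl fun x hx => by rw [(mem_filter.mp hx).2], sum_const, nsmul_eq_mul]
    push_cast
    rfl
  have hconst s := Nat.cast_injective (R := ℚ) (eq_of_sum_mul_stdAddChar_eq_zero hfiber s t)
  rw [card_eq_sum_card_fiberwise (fun x _ => mem_univ (g x)) (s := S),
    sum_congr rfl fun s _ => hconst s, sum_const, card_univ, ZMod.card, smul_eq_mul]

theorem Matrix.mul_conjTranspose_eq_smul_one_of_card_eq {m n K : Type*} [Fintype m] [Fintype n]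
    [DecidableEq m] [DecidableEq n] [Field K] [StarRing K] {M : Matrix m n K} {c : K}
    (hc : c ≠ 0) (hcard : Fintype.card m = Fintype.card n) (h : Mᴴ * M = c • 1) :
    M * Mᴴ = c • 1 := by
  have hleft : (c⁻¹ • Mᴴ) * M = 1 := by rw [smul_mul, h, smul_smul, inv_mul_cancel₀ hc, one_smul]
  calc M * Mᴴ = c • (M * (c⁻¹ • Mᴴ)) := by
        rw [Matrix.mul_smul, smul_smul, mul_inv_cancel₀ hc, one_smul]
    _ = c • 1 := by rw [(mul_eq_one_comm_of_card_eq _ _ _ hcard.symm).mp hleft]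

theorem chr_mul_conj_chr {p d : ℕ} [NeZero p] (a b x y : Fin d → ZMod p) :
    chr p a x * starRingEnd ℂ (chr p b y) = stdAddChar (x ⬝ᵥ a - y ⬝ᵥ b) := by
  rw [chr_eq_stdAddChar, chr_eq_stdAddChar, ← AddChar.map_neg_eq_conj, ← AddChar.map_add_eq_mul,
    sub_eq_add_neg]

section SpectralPair

variable {p d : ℕ} [NeZero p] {E A : Finset (Fin d → ZMod p)}

theorem IsSpectralPair.sum_stdAddChar_dotProduct_sub_eq_zero (h : IsSpectralPair p E A)
    {a b : Fin d → ZMod p} (ha : a ∈ A) (hb : b ∈ A) (hab : a ≠ b) :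
    ∑ x ∈ E, stdAddChar (x ⬝ᵥ (a - b)) = 0 := by
  simpa only [chr_mul_conj_chr, dotProduct_sub] using h.1 a ha b hb hab

theorem IsSpectralPair.sum_stdAddChar_dotProduct_sub_eq_zero_of_card_eq
    (h : IsSpectralPair p E A) (hcard : #E = #A) {x y : Fin d → ZMod p} (hx : x ∈ E) (hy : y ∈ E)
    (hxy : x ≠ y) : ∑ a ∈ A, stdAddChar (a ⬝ᵥ (x - y)) = 0 := by
  classical
  let M : Matrix E A ℂ := of fun x a => chr p a.1 x.1
  have hcols : Mᴴ * M = (#E : ℂ) • 1 := by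
    ext a b
    simp only [mul_apply, conjTranspose_apply, Matrix.smul_apply, one_apply, smul_eq_mul, M,
      of_apply]
    split_ifs with hab
    · simp [hab, mul_comm (starRingEnd ℂ _), chr_mul_conj_chr]
    · rw [mul_zero, ← h.1 b b.2 a a.2 fun h => hab (Subtype.ext h).symm, ← sum_coe_sort E]
      exact sum_congr rfl fun _ _ => mul_comm _ _
  have hrows := mul_conjTranspose_eq_smul_one_of_card_eq
    (Nat.cast_ne_zero.mpr (card_ne_zero_of_mem hx)) (by simpa using hcard) hcols
  have hxy' := congrFun₂ hrows ⟨x, hx⟩ ⟨y, hy⟩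
  simp only [mul_apply, conjTranspose_apply, Matrix.smul_apply, one_apply, smul_eq_mul, M,
    of_apply, Subtype.mk.injEq, hxy, if_false, mul_zero] at hxy'
  rw [← sum_coe_sort A, ← hxy']
  refine sum_congr rfl fun a _ => ?_
  rw [RCLike.star_def, chr_mul_conj_chr, ← sub_dotProduct, dotProduct_comm]

end SpectralPair

section LinearAlgebra

variable {K V : Type*} [Field K] [AddCommGroup V] [Module K V]

theorem LinearMap.natCard_ker_mul_natCard {φ : V →ₗ[K] K} (hφ : φ ≠ 0) :
    Nat.card (ker φ) * Nat.card K = Nat.card V := by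
  have hrange : φ.toAddMonoidHom.range = ⊤ :=
    AddMonoidHom.range_eq_top.mpr (surjective_of_ne_zero hφ)
  rw [← φ.toAddMonoidHom.ker.card_mul_index, AddSubgroup.index_ker, hrange, AddSubgroup.card_top]
  rfl

variable [FiniteDimensional K V]

theorem Submodule.natCard_quotient_span_singleton {v : V} (hv : v ≠ 0) :
    Nat.card (V ⧸ K ∙ v) = Nat.card K ^ (finrank K V - 1) := by
  have := (K ∙ v).finrank_quotient_add_finrank
  rw [finrank_span_singleton hv] at this
  rw [natCard_eq_pow_finrank (K := K), ← this, Nat.add_sub_cancel]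

theorem exists_sub_eq_smul_of_pow_lt_ncard [Finite K] {W : Submodule K V} {T : Set V} {v w : V}
    (hrich : Nat.card K ^ (finrank K W - 1) < (T ∩ {x | x - v ∈ W}).ncard)
    (hw : w ∈ W) (hw0 : w ≠ 0) : ∃ x ∈ T, ∃ y ∈ T, ∃ c : K, c ≠ 0 ∧ x - y = c • w := by
  let L := K ∙ (⟨w, hw⟩ : W)
  have : Finite V := Module.finite_of_finite K
  have : Finite (W ⧸ L) := .of_surjective L.mkQ L.mkQ_surjective
  have htrans : Function.Injective fun u : W => v + (u : V) :=
    (add_right_injective v).comp Subtype.val_injective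
  rw [← Set.ncard_preimage_of_injective_subset_range htrans fun x hx => ⟨⟨x - v, hx.2⟩, by simp⟩,
    ← Submodule.natCard_quotient_span_singleton (K := K) (v := (⟨w, hw⟩ : W)) (by simpa using hw0),
    ← Set.ncard_univ] at hrich
  obtain ⟨a, ha, b, hb, hab, hmk⟩ :=
    Set.exists_ne_map_eq_of_ncard_lt_of_maps_to hrich (f := L.mkQ) fun _ _ => Set.mem_univ _
  obtain ⟨c, hc⟩ := Submodule.mem_span_singleton.mp ((Submodule.Quotient.eq L).mp hmk)
  refine ⟨v + a, ha.1, v + b, hb.1, c, ?_, ?_⟩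
  · rintro rfl
    exact hab (sub_eq_zero.mp (by simpa using hc.symm))
  · simpa using congrArg Subtype.val hc.symm

end LinearAlgebra

section Concentration

variable {p d : ℕ} [Fact p.Prime] {W : Submodule (ZMod p) (Fin d → ZMod p)}

open Classical in
theorem mul_natCard_dotProduct_eq_zero (s : Fin d → ZMod p) :
    p * Nat.card {w : W // s ⬝ᵥ w = 0} =
      if s ∈ perpSet p W then p ^ (finrank (ZMod p) W + 1) else p ^ finrank (ZMod p) W := by
  have hcard : Nat.card W = p ^ finrank (ZMod p) W := by
    rw [natCard_eq_pow_finrank (K := ZMod p), Nat.card_zmod]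
  split_ifs with hs
  · have hall (w : W) : s ⬝ᵥ w = 0 := hs w w.2
    rw [Nat.card_congr (Equiv.subtypeUnivEquiv hall), hcard, pow_succ']
  · let φ := (dotProductBilin (ZMod p) (ZMod p) s).domRestrict W
    have hφ : φ ≠ 0 := fun h => hs fun w hw => LinearMap.congr_fun h ⟨w, hw⟩
    rw [← hcard, ← φ.natCard_ker_mul_natCard hφ, Nat.card_zmod, mul_comm]
    rfl

variable {S T : Finset (Fin d → ZMod p)} {v : Fin d → ZMod p}

theorem mul_card_filter_dotProduct_eq_zero_eq_card
    (hT : ∀ x ∈ T, ∀ y ∈ T, x ≠ y → ∑ s ∈ S, stdAddChar (s ⬝ᵥ (x - y)) = 0)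
    (hrich : p ^ (finrank (ZMod p) W - 1) < (↑T ∩ {x | x - v ∈ W}).ncard)
    {w : Fin d → ZMod p} (hw : w ∈ W) (hw0 : w ≠ 0) : p * #{s ∈ S | s ⬝ᵥ w = 0} = #S := by
  obtain ⟨x, hx, y, hy, c, hc, hxy⟩ :=
    exists_sub_eq_smul_of_pow_lt_ncard (K := ZMod p) (by rwa [Nat.card_zmod]) hw hw0
  have hne : x ≠ y := by
    rintro rfl
    rw [sub_self, eq_comm, smul_eq_zero] at hxy
    tauto
  rw [← mul_card_filter_eq_card_of_sum_stdAddChar_eq_zero S _ (hT x hx y hy hne) 0, hxy]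
  simp only [dotProduct_smul, smul_eq_mul, mul_eq_zero, hc, false_or]

theorem card_eq_pow_finrank_mul_ncard_inter_perpSet
    (hT : ∀ x ∈ T, ∀ y ∈ T, x ≠ y → ∑ s ∈ S, stdAddChar (s ⬝ᵥ (x - y)) = 0)
    (hrich : p ^ (finrank (ZMod p) W - 1) < (↑T ∩ {x | x - v ∈ W}).ncard) :
    #S = p ^ finrank (ZMod p) W * (↑S ∩ perpSet p W).ncard := by
  classical
  set r := finrank (ZMod p) W
  set k := (↑S ∩ perpSet p W).ncard
  have hk : #{s ∈ S | s ∈ perpSet p W} = k := by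
    rw [← Set.ncard_coe_finset, coe_filter]
    rfl
  have hkS : k ≤ #S := hk ▸ card_filter_le _ _
  have hcardW : Fintype.card W = p ^ r := by rw [card_eq_pow_finrank (K := ZMod p), ZMod.card]
  have hby_w : p * ∑ w : W, #{s ∈ S | s ⬝ᵥ w = 0} = p * #S + (p ^ r - 1) * #S := by
    rw [Fintype.sum_eq_add_sum_compl 0, mul_add, mul_sum,
      sum_congr rfl fun w hw => mul_card_filter_dotProduct_eq_zero_eq_card hT hrich w.2
        (by simpa using hw), sum_const, card_compl, card_singleton, hcardW]
    simp
  have hswap : ∑ w : W, #{s ∈ S | s ⬝ᵥ w = 0} = ∑ s ∈ S, Nat.card {w : W // s ⬝ᵥ w = 0} := by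
    simp only [card_filter, Nat.card_eq_fintype_card, Fintype.card_subtype]
    exact sum_comm
  have hby_s : p * ∑ s ∈ S, Nat.card {w : W // s ⬝ᵥ w = 0} =
      k * p ^ (r + 1) + (#S - k) * p ^ r := by
    rw [mul_sum, sum_congr rfl fun s _ => mul_natCard_dotProduct_eq_zero s, sum_ite, sum_const,
      sum_const, hk, ← card_filter_add_card_filter_not (fun s => s ∈ perpSet p W) (s := S), hk]
    simp only [pow_succ', smul_eq_mul, add_tsub_cancel_left]
    rfl
  have hp := (Fact.out : p.Prime).two_le
  have hq : 1 ≤ p ^ r := Nat.one_le_pow _ _ (by omega)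
  rw [hswap, hby_s] at hby_w
  zify [hkS, hq] at hby_w
  have : ((p : ℤ) - 1) * (#S - p ^ r * k) = 0 := by linear_combination hby_w.symm
  rcases mul_eq_zero.mp this with h | h
  · omega
  · linarith

theorem ncard_inter_coset_le_of_card_eq_mul {m : ℕ}
    (hT : ∀ x ∈ T, ∀ y ∈ T, x ≠ y → ∑ s ∈ S, stdAddChar (s ⬝ᵥ (x - y)) = 0)
    (hS : #S = m * p) (hm : 0 < m) (hmp : m < p) (hW : finrank (ZMod p) W = 2) :
    (↑T ∩ {x | x - v ∈ W}).ncard ≤ p := by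
  by_contra! hrich
  have hcount := card_eq_pow_finrank_mul_ncard_inter_perpSet hT (v := v) (by rwa [hW, pow_one])
  rw [hS, hW, sq, mul_assoc, mul_comm m] at hcount
  have hdvd : p ∣ m := ⟨_, Nat.eq_of_mul_eq_mul_left (Fact.out : p.Prime).pos hcount⟩
  exact absurd (Nat.le_of_dvd hm hdvd) (by omega)

end Concentration

theorem plane_concentration_bound_general (p m : ℕ) (hp : p.Prime)
    (E A : Finset (Fin 3 → ZMod p)) (hpair : IsSpectralPair p E A)
    (hE : E.card = m * p) (hA : A.card = m * p)
    (hm : 2 ≤ m) (hm' : m ≤ p - 1)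
    (W : Submodule (ZMod p) (Fin 3 → ZMod p))
    (hW : Module.finrank (ZMod p) W = 2) (v : Fin 3 → ZMod p) :
    ((E : Set (Fin 3 → ZMod p)) ∩ {x | x - v ∈ W}).ncard ≤ p ∧
    ((A : Set (Fin 3 → ZMod p)) ∩ {x | x - v ∈ W}).ncard ≤ p := by
  have : Fact p.Prime := ⟨hp⟩
  have hm0 : 0 < m := by omega
  have hmp : m < p := by have := hp.two_le; omega
  exact ⟨ncard_inter_coset_le_of_card_eq_mul
      (fun _ hx _ hy hxy =>
        hpair.sum_stdAddChar_dotProduct_sub_eq_zero_of_card_eq (hE.trans hA.symm) hx hy hxy)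
      hA hm0 hmp hW,
    ncard_inter_coset_le_of_card_eq_mul
      (fun _ ha _ hb hab => hpair.sum_stdAddChar_dotProduct_sub_eq_zero ha hb hab)
      hE hm0 hmp hW⟩

/-- If `(E, A)` is a spectral pair in `𝔽_p^3` (`p` an odd prime) with
`|E| = |A| = mp`, `2 ≤ m ≤ p - 1`, then every plane (coset of a two-dimensional
subspace) contains at most `p` points of `E`, and likewise for `A`. -/
theorem plane_concentration_bound (p m : ℕ) (hp : p.Prime) (hodd : Odd p)
    (E A : Finset (Fin 3 → ZMod p)) (hpair : IsSpectralPair p E A)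
    (hE : E.card = m * p) (hA : A.card = m * p)
    (hm : 2 ≤ m) (hm' : m ≤ p - 1)
    (W : Submodule (ZMod p) (Fin 3 → ZMod p))
    (hW : Module.finrank (ZMod p) W = 2) (v : Fin 3 → ZMod p) :
    ((E : Set (Fin 3 → ZMod p)) ∩ {x | x - v ∈ W}).ncard ≤ p ∧
    ((A : Set (Fin 3 → ZMod p)) ∩ {x | x - v ∈ W}).ncard ≤ p :=
  plane_concentration_bound_general p m hp E A hpair hE hA hm hm' W hW v
end

section
/- There is no spectral set of size 21 in 𝔽_7^3. -/
open Finset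

/-!
Let `A` be a spectrum of `E`. Then `|A| = |E|`, and the character matrix `M` of the pair
satisfies `M Mᴴ = |E| I`, so (indexing its rows by `E`) `D = det M` satisfies
`D · conj D = |E|^|E| = 21²¹ = 3²¹ · 7²¹`. The entries of `M` are powers of `ζ₇`, so
`D ∈ ℤ[ζ₇]`, a ring on which complex conjugation acts. Since `3` has order `6 = φ(7)` modulo `7`,
`3` stays prime in `ℤ[ζ₇]`, and conjugation fixes it; hence `3` divides `D` and `conj D` equally
often and its exponent in `D · conj D` is even, whereas it is `21`.
-/

open Polynomial ComplexConjugate Matrix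

theorem even_of_mul_map_eq_pow_mul {R : Type*} [CommRing R] [IsDomain R] {q u : R}
    (hq : Prime q) (hu : ¬ q ∣ u) {σ : R →+* R} (hσ : Function.Involutive σ) (hσq : σ q = q)
    {x : R} {k : ℕ} (h : x * σ x = q ^ k * u) : Even k := by
  have hσx : emultiplicity q (σ x) = emultiplicity q x := by
    simpa [hσq] using emultiplicity_map_eq (RingEquiv.ofBijective σ hσ.bijective) (a := q) (b := x)
  have hk := congrArg (emultiplicity q) h
  rw [emultiplicity_mul hq, emultiplicity_mul hq, hσx, emultiplicity_pow_self_of_prime hq,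
    emultiplicity_eq_zero.mpr hu, add_zero] at hk
  have hfin : emultiplicity q x ≠ ⊤ := fun htop ↦ by simp [htop] at hk
  obtain ⟨m, hm⟩ := ENat.ne_top_iff_exists.mp hfin
  rw [← hm] at hk
  exact ⟨m, by exact_mod_cast hk.symm⟩

theorem Prime.not_dvd_natCast_of_coprime {R : Type*} [CommRing R] {q u : ℕ}
    (hq : Prime (q : R)) (hqu : q.Coprime u) : ¬ (q : R) ∣ u := fun hdvd ↦ by
  have hcop := (Nat.isCoprime_iff_coprime.mpr hqu).map (Int.castRingHom R)
  simp only [eq_intCast, Int.cast_natCast] at hcop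
  exact hq.not_isUnit (hcop.isUnit_of_dvd' dvd_rfl hdvd)

noncomputable def zeta (n : ℕ) : ℂ := Complex.exp (2 * Real.pi * Complex.I / n)

section CyclotomicIntegers

variable (n : ℕ) [NeZero n]

theorem isPrimitiveRoot_zeta : IsPrimitiveRoot (zeta n) n :=
  Complex.isPrimitiveRoot_exp n (NeZero.ne n)

theorem conj_zeta : conj (zeta n) = zeta n ^ (n - 1) := by
  have hconj : conj (2 * Real.pi * Complex.I / n) = -(2 * Real.pi * Complex.I / n) := by
    simp only [map_div₀, map_mul, map_ofNat, Complex.conj_ofReal, Complex.conj_I, map_natCast]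
    ring
  rw [zeta, ← Complex.exp_conj, hconj, Complex.exp_neg, pow_sub₀ _ (Complex.exp_ne_zero _)
    NeZero.one_le, ← zeta, (isPrimitiveRoot_zeta n).pow_eq_one, one_mul, pow_one]

noncomputable def cyclotomicEmbedding : AdjoinRoot (cyclotomic n ℤ) →+* ℂ :=
  AdjoinRoot.lift (Int.castRingHom ℂ) (zeta n) <| by
    simpa [← eval_map, map_cyclotomic] using
      (isPrimitiveRoot_zeta n).isRoot_cyclotomic (NeZero.pos n)

@[simp]
theorem cyclotomicEmbedding_root : cyclotomicEmbedding n (AdjoinRoot.root _) = zeta n :=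
  AdjoinRoot.lift_root _

theorem cyclotomicEmbedding_injective : Function.Injective (cyclotomicEmbedding n) := by
  rw [injective_iff_map_eq_zero]
  intro x hx
  obtain ⟨f, rfl⟩ := AdjoinRoot.mk_surjective x
  rw [AdjoinRoot.mk_eq_zero, cyclotomic_eq_minpoly (isPrimitiveRoot_zeta n) (NeZero.pos n)]
  refine minpoly.isIntegrallyClosed_dvd ((isPrimitiveRoot_zeta n).isIntegral (NeZero.pos n)) ?_
  rwa [cyclotomicEmbedding, AdjoinRoot.lift_mk, ← algebraMap_int_eq, ← aeval_def] at hx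

instance : IsDomain (AdjoinRoot (cyclotomic n ℤ)) :=
  (cyclotomicEmbedding_injective n).isDomain

noncomputable def cyclotomicConj : AdjoinRoot (cyclotomic n ℤ) →+* AdjoinRoot (cyclotomic n ℤ) :=
  AdjoinRoot.lift (AdjoinRoot.of _) (AdjoinRoot.root _ ^ (n - 1)) <| by
    apply cyclotomicEmbedding_injective n
    rw [hom_eval₂, map_zero, map_pow, cyclotomicEmbedding_root, ← conj_zeta]
    simpa [← eval_map, map_cyclotomic] using
      ((isPrimitiveRoot_zeta n).map_of_injective (RingHom.injective conj)).isRoot_cyclotomic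
        (NeZero.pos n)

theorem cyclotomicEmbedding_cyclotomicConj (x : AdjoinRoot (cyclotomic n ℤ)) :
    cyclotomicEmbedding n (cyclotomicConj n x) = conj (cyclotomicEmbedding n x) := by
  rw [← RingHom.comp_apply, ← RingHom.comp_apply]
  congr 1
  refine AdjoinRoot.ringHom_ext (RingHom.ext_int _ _) ?_
  simp [cyclotomicConj, conj_zeta]

theorem cyclotomicConj_involutive : Function.Involutive (cyclotomicConj n) := fun x ↦
  cyclotomicEmbedding_injective n <| by simp [cyclotomicEmbedding_cyclotomicConj]

variable {n} in
/-- A prime `q` stays prime in `ℤ[ζₙ]` when `Φₙ` stays irreducible modulo `q`, since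
`ℤ[ζₙ] ⧸ (q) ≃ 𝔽_q[X] ⧸ (Φₙ)`. -/
theorem prime_natCast_of_irreducible_cyclotomic {q : ℕ} [Fact q.Prime]
    (h : Irreducible (cyclotomic n (ZMod q))) : Prime (q : AdjoinRoot (cyclotomic n ℤ)) := by
  have : Fact (Irreducible (cyclotomic n (ZMod q))) := ⟨h⟩
  have hq0 : (q : AdjoinRoot (cyclotomic n ℤ)) ≠ 0 := fun h0 ↦ by
    simpa [(Fact.out : q.Prime).ne_zero] using congrArg (cyclotomicEmbedding n) h0
  have hI : Ideal.span {(q : AdjoinRoot (cyclotomic n ℤ))} =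
      (Ideal.span {(q : ℤ)}).map (AdjoinRoot.of _) := by
    rw [Ideal.map_span, Set.image_singleton, map_natCast]
  let e := (Ideal.quotEquivOfEq hI).trans <|
    (AdjoinRoot.quotAdjoinRootEquivQuotPolynomialQuot _ _).trans <|
      AdjoinRoot.mapRingEquiv (Int.quotientSpanNatEquivZMod q) _ (cyclotomic n (ZMod q))
        (by simp [map_cyclotomic])
  rw [← Ideal.span_singleton_prime hq0, ← Ideal.Quotient.isDomain_iff_prime]
  exact Function.Injective.isDomain e e.injective

end CyclotomicIntegers

theorem irreducible_cyclotomic_seven_zmod_three : Irreducible (cyclotomic 7 (ZMod 3)) := by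
  refine ZMod.irreducible_of_dvd_cyclotomic_of_natDegree (by norm_num) dvd_rfl ?_
  rw [natDegree_cyclotomic, Nat.totient_prime (by norm_num), eq_comm, orderOf_eq_iff (by norm_num)]
  refine ⟨Units.ext (by decide), fun m hm hm0 ↦ ?_⟩
  interval_cases m <;> exact fun h ↦ absurd (congrArg Units.val h) (by decide)

theorem chr_eq_zeta_pow (p : ℕ) {d : ℕ} (a x : Fin d → ZMod p) :
    chr p a x = zeta p ^ (∑ i, x i * a i).val := by
  rw [chr, zeta, ← Complex.exp_nat_mul]
  ring_nf

theorem chr_mul_conj_self (p : ℕ) {d : ℕ} (a x : Fin d → ZMod p) :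
    chr p a x * conj (chr p a x) = 1 := by
  rw [chr, ← Complex.exp_conj, ← Complex.exp_add, ← Complex.exp_zero]
  congr 1
  simp only [map_div₀, map_mul, map_ofNat, Complex.conj_ofReal, Complex.conj_I, map_natCast]
  ring

noncomputable def charMatrix (p : ℕ) {d : ℕ} (E A : Finset (Fin d → ZMod p)) : Matrix A E ℂ :=
  of fun a x ↦ chr p a.1 x.1

namespace IsSpectralPair

variable {p d : ℕ} {E A : Finset (Fin d → ZMod p)}

theorem card_eq (h : IsSpectralPair p E A) : A.card = E.card := by
  obtain ⟨-, hspan, hind⟩ := h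
  let χ : A → E → ℂ := fun a x ↦ chr p a.1 x.1
  have hli : LinearIndependent ℂ χ := Fintype.linearIndependent_iff.mpr fun c hc ↦
    hind c fun x ↦ by simpa [χ, Finset.sum_apply] using congrFun hc x
  have hsp : ⊤ ≤ Submodule.span ℂ (Set.range χ) := fun f _ ↦ by
    obtain ⟨c, hc⟩ := hspan f
    have hf : f = ∑ a, c a • χ a := funext fun x ↦ by simpa [χ, Finset.sum_apply] using hc x
    exact hf ▸ Submodule.sum_mem _ fun a _ ↦ Submodule.smul_mem _ _ (Submodule.subset_span ⟨a, rfl⟩)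
  simpa using (Module.finrank_eq_card_basis (Module.Basis.mk hli hsp)).symm

theorem charMatrix_mul_conjTranspose (h : IsSpectralPair p E A) :
    charMatrix p E A * (charMatrix p E A)ᴴ = (E.card : ℂ) • 1 := by
  ext a b
  simp only [mul_apply, charMatrix, conjTranspose_apply, of_apply, RCLike.star_def]
  rw [Finset.sum_coe_sort E fun x ↦ chr p a x * conj (chr p b x)]
  obtain rfl | hab := eq_or_ne a b
  · simp [chr_mul_conj_self]
  · simp [h.1 a a.2 b b.2 (Subtype.coe_injective.ne hab), hab]

theorem exists_mul_cyclotomicConj_eq [NeZero p] (h : IsSpectralPair p E A) :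
    ∃ D : AdjoinRoot (cyclotomic p ℤ), D * cyclotomicConj p D = E.card ^ E.card := by
  let e : E ≃ A := Fintype.equivOfCardEq (by simp [h.card_eq])
  let N : Matrix E E (AdjoinRoot (cyclotomic p ℤ)) :=
    of fun x y ↦ AdjoinRoot.root _ ^ (∑ i, y.1 i * (e x).1 i).val
  have hN : N.map (cyclotomicEmbedding p) = (charMatrix p E A).submatrix e id := by
    ext x y
    simp [N, charMatrix, chr_eq_zeta_pow]
  refine ⟨N.det, cyclotomicEmbedding_injective p ?_⟩
  rw [map_mul, cyclotomicEmbedding_cyclotomicConj, RingHom.map_det, RingHom.mapMatrix_apply, hN,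
    ← RCLike.star_def, ← det_conjTranspose, ← det_mul, conjTranspose_submatrix,
    ← submatrix_mul _ _ _ _ _ Function.bijective_id, h.charMatrix_mul_conjTranspose]
  simp [h.card_eq]

end IsSpectralPair

theorem IsSpectral.even_of_card_pow_eq {p d : ℕ} [NeZero p] {E : Finset (Fin d → ZMod p)}
    (hE : IsSpectral p E) {q u k : ℕ} (hq : Prime (q : AdjoinRoot (cyclotomic p ℤ)))
    (hqu : q.Coprime u) (hcard : E.card ^ E.card = q ^ k * u) : Even k := by
  obtain ⟨A, hA⟩ := hE
  obtain ⟨D, hD⟩ := hA.exists_mul_cyclotomicConj_eq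
  exact even_of_mul_map_eq_pow_mul hq (hq.not_dvd_natCast_of_coprime hqu)
    (cyclotomicConj_involutive p) (map_natCast _ q)
    (by rw [hD]; exact_mod_cast congrArg Nat.cast hcard)

/-- There is no spectral set of size 21 in `𝔽_7^3`. -/
theorem no_spectral_of_card_21 (E : Finset (Fin 3 → ZMod 7)) (hE : E.card = 21) :
    ¬ IsSpectral 7 E := fun hspec ↦
  Nat.not_even_iff_odd.mpr (by decide : Odd 21) <|
    hspec.even_of_card_pow_eq (u := 7 ^ 21)
      (prime_natCast_of_irreducible_cyclotomic irreducible_cyclotomic_seven_zmod_three)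
      (by norm_num) (by rw [hE]; norm_num)
end
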